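/- For υ = 1, p, q real, the polynomial 𝔐_n(p,q,1;x) = Σ_{r=0}^n Σ_{s=0}^r (-1)^{s+n} C(r,s) [(p+q-n)_r / r!] (s+q+1)_n x^r (1+x)^{n-r} equals the finite orthogonal polynomial M_n^{(p,q)}(x). -/

import Mathlib

open Finset MeasureTheory Real Filter

/-- Pochhammer symbol `(a)_k = a (a+1) ⋯ (a+k-1)` for a real `a`. -/
noncomputable def poch (a : ℝ) (k : ℕ) : ℝ := ∏ i ∈ Finset.range k, (a + i)

/-- Generalized binomial coefficient `C(a, j)` for real `a`. -/
noncomputable def rchoose (a : ℝ) (j : ℕ) : ℝ := (-1 : ℝ) ^ j * poch (-a) j / j.factorial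

/-- The finite orthogonal polynomials `M_n^{(p,q)}(x)`. -/
noncomputable def Mfin (p q : ℝ) (n : ℕ) (x : ℝ) : ℝ :=
  (-1 : ℝ) ^ n * n.factorial *
    ∑ j ∈ Finset.range (n + 1), rchoose (p - n - 1) j * rchoose (q + n) (n - j) * (-x) ^ j

/-- The first set of finite biorthogonal polynomials `M_n(p,q,υ;x)`. -/
noncomputable def Mbio (p q : ℝ) (υ n : ℕ) (x : ℝ) : ℝ :=
  (-1 : ℝ) ^ n * poch (q + 1) (υ * n) *
    ∑ j ∈ Finset.range (n + 1), (-1 : ℝ) ^ j * (n.choose j : ℝ) *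
      (poch (n + 1 - p) (υ * j) / poch (q + 1) (υ * j)) * (-x) ^ (υ * j)

/-- The second set of finite biorthogonal polynomials `𝔐_n(p,q,υ;x)`. -/
noncomputable def Mfrak (p q : ℝ) (υ n : ℕ) (x : ℝ) : ℝ :=
  ∑ r ∈ Finset.range (n + 1), ∑ s ∈ Finset.range (r + 1),
    (-1 : ℝ) ^ (s + n) * (r.choose s : ℝ) * (poch (p + q - n) r / r.factorial) *
      poch ((s + q + 1) / υ) n * x ^ r * (1 + x) ^ (n - r)

lemma poch_succ (a : ℝ) (k : ℕ) : poch a (k+1) = poch a k * (a + k) := by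
  simp [poch, prod_range_succ]

lemma poch_succ' (a : ℝ) (k : ℕ) : poch a (k+1) = a * poch (a+1) k := by
  unfold poch; rw [prod_range_succ', mul_comm]; congr 1
  · simp
  · exact prod_congr rfl fun i _ => by push_cast; ring

lemma poch_add (a : ℝ) (m k : ℕ) : poch a (m+k) = poch a m * poch (a+m) k := by
  unfold poch
  rw [prod_range_add]
  congr 1
  exact prod_congr rfl fun i _ => by push_cast; ring

lemma poch_neg (a : ℝ) (k : ℕ) : poch (-a) k = (-1)^k * poch (a - k + 1) k := by
  induction k generalizing a with
  | zero => simp [poch]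
  | succ k ih =>
    rw [poch_succ, ih, poch_succ']
    push_cast
    ring_nf

lemma alt_sum_succ (f : ℕ → ℝ) (r : ℕ) :
    ∑ s ∈ range (r+2), (-1:ℝ)^s * ((r+1).choose s) * f s
      = ∑ s ∈ range (r+1), (-1:ℝ)^s * (r.choose s) * (f s - f (s+1)) := by
  have h1 : ∑ s ∈ range (r+2), (-1:ℝ)^s * ((r+1).choose s) * f s
      = (∑ s ∈ range (r+1), (-1:ℝ)^(s+1) * ((r+1).choose (s+1)) * f (s+1)) + f 0 := by
    rw [Finset.sum_range_succ' (fun s => (-1:ℝ)^s * ((r+1).choose s) * f s) (r+1)]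
    simp
  have h2 : ∀ s, ((r+1).choose (s+1) : ℝ) = (r.choose s : ℝ) + (r.choose (s+1) : ℝ) := by
    intro s; rw [Nat.choose_succ_succ]; push_cast; ring
  have h3 : ∑ s ∈ range (r+1), (-1:ℝ)^s * (r.choose (s+1)) * f (s+1)
      = (-1:ℝ)^0 * (r.choose 0) * f 0 - ∑ s ∈ range (r+1), (-1:ℝ)^s * (r.choose s) * f s := by
    have : ∑ s ∈ range (r+2), (-1:ℝ)^s * (r.choose s) * f s
        = (∑ s ∈ range (r+1), (-1:ℝ)^(s+1) * (r.choose (s+1)) * f (s+1)) + (-1:ℝ)^0 * (r.choose 0) * f 0 := by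
      rw [Finset.sum_range_succ' (fun s => (-1:ℝ)^s * (r.choose s) * f s) (r+1)]
    rw [Finset.sum_range_succ] at this
    simp only [Nat.choose_succ_self, Nat.cast_zero, mul_zero, zero_mul, add_zero] at this
    have h4 : ∑ s ∈ range (r+1), (-1:ℝ)^(s+1) * (r.choose (s+1)) * f (s+1)
        = - ∑ s ∈ range (r+1), (-1:ℝ)^s * (r.choose (s+1)) * f (s+1) := by
      rw [← Finset.sum_neg_distrib]
      refine sum_congr rfl fun s _ => ?_
      ring
    rw [h4] at this
    linarith [this]
  calc ∑ s ∈ range (r+2), (-1:ℝ)^s * ((r+1).choose s) * f s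
      = (∑ s ∈ range (r+1), (-1:ℝ)^(s+1) * ((r+1).choose (s+1)) * f (s+1)) + f 0 := h1
    _ = (∑ s ∈ range (r+1), ((-1:ℝ)^(s+1) * (r.choose s) * f (s+1) + (-1:ℝ)^(s+1) * (r.choose (s+1)) * f (s+1))) + f 0 := by
        congr 1; refine sum_congr rfl fun s _ => ?_; rw [h2]; ring
    _ = (∑ s ∈ range (r+1), (-1:ℝ)^(s+1) * (r.choose s) * f (s+1))
        - (∑ s ∈ range (r+1), (-1:ℝ)^s * (r.choose (s+1)) * f (s+1)) + f 0 := by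
        rw [Finset.sum_add_distrib]
        have : ∑ s ∈ range (r+1), (-1:ℝ)^(s+1) * (r.choose (s+1)) * f (s+1)
            = - ∑ s ∈ range (r+1), (-1:ℝ)^s * (r.choose (s+1)) * f (s+1) := by
          rw [← Finset.sum_neg_distrib]; exact sum_congr rfl fun s _ => by ring
        rw [this]; ring
    _ = ∑ s ∈ range (r+1), (-1:ℝ)^s * (r.choose s) * (f s - f (s+1)) := by
        rw [h3]
        simp only [mul_sub]
        rw [Finset.sum_sub_distrib]
        have : ∑ s ∈ range (r+1), (-1:ℝ)^(s+1) * (r.choose s) * f (s+1)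
            = - ∑ s ∈ range (r+1), (-1:ℝ)^s * (r.choose s) * f (s+1) := by
          rw [← Finset.sum_neg_distrib]; exact sum_congr rfl fun s _ => by ring
        rw [this]
        simp; ring

lemma lemA (r : ℕ) : ∀ (n : ℕ) (c : ℝ), r ≤ n →
    ∑ s ∈ range (r+1), (-1:ℝ)^s * (r.choose s) * poch (c + s) n
      = (-1:ℝ)^r * (n.descFactorial r) * poch (c + r) (n - r) := by
  induction r with
  | zero => intro n c _; simp
  | succ r ih =>
    intro n c hrn
    obtain ⟨m, rfl⟩ : ∃ m, n = m + 1 := ⟨n - 1, by omega⟩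
    have hrm : r ≤ m := by omega
    rw [show r + 1 + 1 = r + 2 from rfl, alt_sum_succ]
    have key : ∀ s : ℕ, poch (c + s) (m+1) - poch (c + ((s+1:ℕ):ℝ)) (m+1)
        = -((m:ℝ)+1) * poch ((c+1) + s) m := by
      intro s
      rw [poch_succ' (c + s) m, poch_succ (c + ((s+1:ℕ):ℝ)) m]
      push_cast
      ring
    calc ∑ s ∈ range (r+1), (-1:ℝ)^s * (r.choose s) * (poch (c + s) (m+1) - poch (c + ((s+1:ℕ):ℝ)) (m+1))
        = ∑ s ∈ range (r+1), (-((m:ℝ)+1)) * ((-1:ℝ)^s * (r.choose s) * poch ((c+1) + s) m) := by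
          refine sum_congr rfl fun s _ => ?_
          rw [key s]; ring
      _ = (-((m:ℝ)+1)) * ((-1:ℝ)^r * (m.descFactorial r) * poch ((c+1) + r) (m - r)) := by
          rw [← Finset.mul_sum, ih m (c+1) hrm]
      _ = (-1:ℝ)^(r+1) * ((m+1).descFactorial (r+1)) * poch (c + ((r+1:ℕ):ℝ)) (m+1 - (r+1)) := by
          rw [Nat.succ_descFactorial_succ, Nat.succ_sub_succ]
          have : (c + ((r+1:ℕ):ℝ)) = (c+1) + r := by push_cast; ring
          rw [this]
          push_cast
          ring

lemma lemB (j : ℕ) : ∀ (a b : ℝ),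
    ∑ r ∈ range (j+1), (-1:ℝ)^r * (j.choose r) * (poch a r * poch (b + r) (j - r))
      = poch (b - a) j := by
  induction j with
  | zero => intro a b; simp [poch]
  | succ j ih =>
    intro a b
    rw [show j + 1 + 1 = j + 2 from rfl, alt_sum_succ]
    have key : ∀ r ∈ range (j+1),
        (poch a r * poch (b + r) (j+1 - r) - poch a (r+1) * poch (b + ((r+1:ℕ):ℝ)) (j+1 - (r+1)))
        = (b - a) * (poch a r * poch ((b+1) + r) (j - r)) := by
      intro r hr
      rw [mem_range] at hr
      have h1 : j + 1 - r = (j - r) + 1 := by omega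
      have h2 : j + 1 - (r + 1) = j - r := by omega
      rw [h1, h2, poch_succ' (b + r) (j - r), poch_succ a r]
      have e1 : (b + (r:ℝ) + 1) = (b+1) + r := by ring
      rw [e1]
      have e2 : (b + ((r+1:ℕ):ℝ)) = (b+1) + r := by push_cast; ring
      rw [e2]
      ring
    calc ∑ r ∈ range (j+1), (-1:ℝ)^r * (j.choose r) *
          (poch a r * poch (b + r) (j+1 - r) - poch a (r+1) * poch (b + ((r+1:ℕ):ℝ)) (j+1 - (r+1)))
        = ∑ r ∈ range (j+1), (b - a) * ((-1:ℝ)^r * (j.choose r) * (poch a r * poch ((b+1) + r) (j - r))) := by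
          refine sum_congr rfl fun r hr => ?_
          rw [key r hr]; ring
      _ = (b - a) * poch ((b+1) - a) j := by rw [← Finset.mul_sum, ih a (b+1)]
      _ = poch (b - a) (j+1) := by
          rw [poch_succ']
          have : b - a + 1 = (b+1) - a := by ring
          rw [this]

theorem Mfrak_one_eq_Mfin (p q : ℝ) (n : ℕ) (x : ℝ) :
    Mfrak p q 1 n x = Mfin p q n x := by
  -- abbreviations
  have hfac : ∀ k : ℕ, ((k.factorial : ℝ)) ≠ 0 := fun k => by
    exact_mod_cast (Nat.factorial_pos k).ne'
  -- Step 1: collapse the inner sum of Mfrak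
  have step1 : Mfrak p q 1 n x
      = ∑ r ∈ range (n+1), (-1:ℝ)^n * (-1:ℝ)^r * (n.choose r) * poch (p+q-(n:ℝ)) r
          * poch ((q+1) + (r:ℝ)) (n-r) * x^r * (1+x)^(n-r) := by
    unfold Mfrak
    refine sum_congr rfl fun r hr => ?_
    rw [mem_range] at hr
    have hrn : r ≤ n := by omega
    calc ∑ s ∈ range (r+1), (-1:ℝ)^(s+n) * (r.choose s) * (poch (p+q-((n:ℕ):ℝ)) r / r.factorial)
            * poch (((s:ℝ)+q+1)/((1:ℕ):ℝ)) n * x^r * (1+x)^(n-r)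
        = ((-1:ℝ)^n * (poch (p+q-(n:ℝ)) r / r.factorial) * x^r * (1+x)^(n-r))
            * ∑ s ∈ range (r+1), (-1:ℝ)^s * (r.choose s) * poch ((q+1) + (s:ℝ)) n := by
          rw [Finset.mul_sum]
          refine sum_congr rfl fun s _ => ?_
          have e1 : (((s:ℝ)+q+1)/((1:ℕ):ℝ)) = (q+1) + (s:ℝ) := by push_cast; ring
          rw [e1, pow_add]
          ring
      _ = (-1:ℝ)^n * (-1:ℝ)^r * (n.choose r) * poch (p+q-(n:ℝ)) r
            * poch ((q+1) + (r:ℝ)) (n-r) * x^r * (1+x)^(n-r) := by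
          rw [lemA r n (q+1) hrn, Nat.descFactorial_eq_factorial_mul_choose]
          push_cast
          field_simp
  -- Step 2: expand (1+x)^(n-r) and reindex
  have step2 : Mfrak p q 1 n x
      = ∑ j ∈ range (n+1), ∑ r ∈ range (j+1),
          (-1:ℝ)^n * (-1:ℝ)^r * (n.choose r) * poch (p+q-(n:ℝ)) r
            * poch ((q+1) + (r:ℝ)) (n-r) * ((n-r).choose (j-r)) * x^j := by
    rw [step1]
    have expand : ∀ r ∈ range (n+1),
        (-1:ℝ)^n * (-1:ℝ)^r * (n.choose r) * poch (p+q-(n:ℝ)) r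
          * poch ((q+1) + (r:ℝ)) (n-r) * x^r * (1+x)^(n-r)
        = ∑ j ∈ Ico r (n+1),
            (-1:ℝ)^n * (-1:ℝ)^r * (n.choose r) * poch (p+q-(n:ℝ)) r
              * poch ((q+1) + (r:ℝ)) (n-r) * ((n-r).choose (j-r)) * x^j := by
      intro r hr
      rw [mem_range] at hr
      have hrn : r ≤ n := by omega
      rw [Finset.sum_Ico_eq_sum_range]
      have hnr : n + 1 - r = (n - r) + 1 := by omega
      rw [hnr]
      rw [add_comm 1 x, add_pow]
      rw [Finset.mul_sum]
      refine sum_congr rfl fun k hk => ?_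
      rw [mem_range] at hk
      have h1 : r + k - r = k := by omega
      rw [h1, one_pow, pow_add]
      ring
    rw [Finset.sum_congr rfl expand]
    rw [Finset.range_eq_Ico, Finset.sum_Ico_Ico_comm 0 (n+1)]
    simp only [Finset.range_eq_Ico]
  -- Step 3: evaluate the inner sum via Vandermonde
  have step3 : ∀ j ∈ range (n+1),
      ∑ r ∈ range (j+1),
          (-1:ℝ)^n * (-1:ℝ)^r * (n.choose r) * poch (p+q-(n:ℝ)) r
            * poch ((q+1) + (r:ℝ)) (n-r) * ((n-r).choose (j-r)) * x^j
      = (-1:ℝ)^n * (n.choose j) * poch ((n:ℝ)+1-p) j * poch ((q+1) + (j:ℝ)) (n-j) * x^j := by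
    intro j hj
    rw [mem_range] at hj
    have hjn : j ≤ n := by omega
    calc ∑ r ∈ range (j+1),
            (-1:ℝ)^n * (-1:ℝ)^r * (n.choose r) * poch (p+q-(n:ℝ)) r
              * poch ((q+1) + (r:ℝ)) (n-r) * ((n-r).choose (j-r)) * x^j
        = ((-1:ℝ)^n * (n.choose j) * poch ((q+1) + (j:ℝ)) (n-j) * x^j)
            * ∑ r ∈ range (j+1), (-1:ℝ)^r * (j.choose r)
              * (poch (p+q-(n:ℝ)) r * poch ((q+1) + (r:ℝ)) (j-r)) := by
          rw [Finset.mul_sum]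
          refine sum_congr rfl fun r hr => ?_
          rw [mem_range] at hr
          have hrj : r ≤ j := by omega
          have hsplit : poch ((q+1) + (r:ℝ)) (n-r)
              = poch ((q+1) + (r:ℝ)) (j-r) * poch ((q+1) + (j:ℝ)) (n-j) := by
            have h1 : n - r = (j - r) + (n - j) := by omega
            rw [h1, poch_add]
            congr 1
            rw [Nat.cast_sub hrj]
            ring
          have hc : ((n.choose r : ℝ)) * ((n-r).choose (j-r) : ℝ)
              = ((n.choose j : ℝ)) * ((j.choose r : ℝ)) := by
            exact_mod_cast congrArg (Nat.cast (R := ℝ)) (Nat.choose_mul hrj : n.choose j * j.choose r = _).symm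
          rw [hsplit]
          linear_combination ((-1:ℝ)^n * (-1:ℝ)^r * poch (p+q-(n:ℝ)) r
            * poch ((q+1) + (r:ℝ)) (j-r) * poch ((q+1) + (j:ℝ)) (n-j) * x^j) * hc
      _ = (-1:ℝ)^n * (n.choose j) * poch ((n:ℝ)+1-p) j * poch ((q+1) + (j:ℝ)) (n-j) * x^j := by
          rw [lemB j (p+q-(n:ℝ)) (q+1)]
          have e : (q+1) - (p+q-(n:ℝ)) = (n:ℝ)+1-p := by ring
          rw [e]
          ring
  -- Step 4: rewrite Mfin
  have step4 : Mfin p q n x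
      = ∑ j ∈ range (n+1), (-1:ℝ)^n * (n.choose j) * poch ((n:ℝ)+1-p) j
          * poch ((q+1) + (j:ℝ)) (n-j) * x^j := by
    unfold Mfin
    rw [Finset.mul_sum]
    refine sum_congr rfl fun j hj => ?_
    rw [mem_range] at hj
    have hjn : j ≤ n := by omega
    unfold rchoose
    have e1 : -(p-(n:ℝ)-1) = (n:ℝ)+1-p := by ring
    rw [e1]
    rw [poch_neg (q+(n:ℝ)) (n-j)]
    have e2 : q+(n:ℝ) - ((n-j:ℕ):ℝ) + 1 = (q+1) + (j:ℝ) := by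
      rw [Nat.cast_sub hjn]; ring
    rw [e2, neg_pow x j]
    have h1 : ((-1:ℝ))^(n-j) * (-1:ℝ)^(n-j) = 1 := by
      rw [← pow_add, ← two_mul, pow_mul]; norm_num
    have h2 : ((-1:ℝ))^j * (-1:ℝ)^j = 1 := by
      rw [← pow_add, ← two_mul, pow_mul]; norm_num
    have hc : ((n.choose j : ℝ)) * (j.factorial : ℝ) * ((n-j).factorial : ℝ) = (n.factorial : ℝ) := by
      exact_mod_cast congrArg (Nat.cast (R := ℝ)) (Nat.choose_mul_factorial_mul_factorial hjn)
    rw [← hc]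
    have h12 : ((-1:ℝ))^j * (-1:ℝ)^j * ((-1:ℝ)^(n-j) * (-1:ℝ)^(n-j)) = 1 := by
      rw [← pow_add, ← pow_add, ← two_mul, ← two_mul, pow_mul, pow_mul]; norm_num
    field_simp
    linear_combination ((n.choose j : ℝ)
      * poch ((n:ℝ)+1-p) j * poch ((q+1) + (j:ℝ)) (n-j) * x^j) * h12
  rw [step2, Finset.sum_congr rfl step3, step4]
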